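/- arXiv:2403.17042 — 2 statements merged into one kernel-verified Lean document; each statement's English description precedes it below -/
import Mathlib

section
/- Fix η > 0, x_noisy ∈ ℝ^d, and a probability density p⋆ on ℝ^d. Define the denoising-posterior density p_z(x) = p⋆(x + x_noisy) e^{−‖x‖²/(2η²)} / Z, where Z = ∫ p⋆(x' + x_noisy) e^{−‖x'‖²/(2η²)} dx' (assume Z > 0), and for τ > 0 define p^Z_τ(x) = ∫ p_z(w) φ_{1−e^{−2τ}}(x − e^{−τ} w) dw. Then for every τ > 0 and x ∈ ℝ^d, ∇_x log p^Z_τ(x) = − e^{2τ} x / (η² + e^{2τ} − 1) + ( e^{τ−τ̃} η² / (η² + e^{2τ} − 1) ) · s( τ̃, e^{−τ̃} x_noisy + e^{τ−τ̃} η² x / (η² + e^{2τ} − 1) ), where τ̃ = (1/2)·log( η² (e^{2τ} − 1)/(η² + e^{2τ} − 1) + 1 ). -/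
/-!
With `v = 1 - e^{-2τ}` and `ṽ = 1 - e^{-2τ̃}`, completing the square in `w` gives
`exp (-‖w‖²/(2η²)) φ_v(y - e^{-τ} w) = K e^{q‖y‖²} φ_ṽ(c y - e^{-τ̃} w)`; matching the coefficients
of `‖w‖²`, `⟪y, w⟫` and `‖y‖²` amounts to `1/(e^{2τ̃} - 1) = 1/(e^{2τ} - 1) + 1/η²`, which is
the definition of `τ̃`, together with the stated values of `c` and `q`. Substituting
`z = w + x_noisy` then gives `p^Z_τ(y) = K' e^{q‖y‖²} p^{OU}_τ̃(e^{-τ̃} x_noisy + c y)`, whose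
logarithmic gradient is `2q y + c s(τ̃, e^{-τ̃} x_noisy + c y)`.
-/

open MeasureTheory

/-- Centered Gaussian density on `ℝ^d` with variance `v`:
`φ_v(x) = (2πv)^{−d/2} exp(−‖x‖²/(2v))`. -/
noncomputable def gaussDensity (d : ℕ) (v : ℝ) (x : EuclideanSpace ℝ (Fin d)) : ℝ :=
  (2 * Real.pi * v) ^ (-(d : ℝ) / 2) * Real.exp (-‖x‖ ^ 2 / (2 * v))

/-- Ornstein–Uhlenbeck marginal density at time `τ` started from the density `p`:
the density of `e^{−τ} X₀ + √(1−e^{−2τ}) ε` with `X₀ ∼ p`, `ε ∼ N(0, I_d)`. -/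
noncomputable def pOU {d : ℕ} (p : EuclideanSpace ℝ (Fin d) → ℝ) (τ : ℝ)
    (x : EuclideanSpace ℝ (Fin d)) : ℝ :=
  ∫ z, p z * gaussDensity d (1 - Real.exp (-2 * τ)) (x - Real.exp (-τ) • z)

/-- Continuous-time score of the OU flow started from `p`: `s(τ, x) = ∇ₓ log p^{OU}_τ(x)`. -/
noncomputable def score {d : ℕ} (p : EuclideanSpace ℝ (Fin d) → ℝ) (τ : ℝ)
    (x : EuclideanSpace ℝ (Fin d)) : EuclideanSpace ℝ (Fin d) :=
  gradient (fun y => Real.log (pOU p τ y)) x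

/-- Heat-flow density at time `τ` started from the density `p`:
the density of `X₀ + √τ ε` with `X₀ ∼ p`, `ε ∼ N(0, I_d)`. -/
noncomputable def heatDensity {d : ℕ} (p : EuclideanSpace ℝ (Fin d) → ℝ) (τ : ℝ)
    (x : EuclideanSpace ℝ (Fin d)) : ℝ :=
  ∫ z, p z * gaussDensity d τ (x - z)

/-- Denoising-posterior density: `p_z(x) = p⋆(x + x_noisy) e^{−‖x‖²/(2η²)} / Z`. -/
noncomputable def pZ {d : ℕ} (p : EuclideanSpace ℝ (Fin d) → ℝ) (η : ℝ)
    (xn : EuclideanSpace ℝ (Fin d)) (x : EuclideanSpace ℝ (Fin d)) : ℝ :=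
  p (x + xn) * Real.exp (-‖x‖ ^ 2 / (2 * η ^ 2)) /
    ∫ x', p (x' + xn) * Real.exp (-‖x'‖ ^ 2 / (2 * η ^ 2))

/-- OU marginal started from the denoising posterior:
`p^Z_τ(x) = ∫ p_z(w) φ_{1−e^{−2τ}}(x − e^{−τ} w) dw`. -/
noncomputable def pZMarginal {d : ℕ} (p : EuclideanSpace ℝ (Fin d) → ℝ) (η : ℝ)
    (xn : EuclideanSpace ℝ (Fin d)) (τ : ℝ) (x : EuclideanSpace ℝ (Fin d)) : ℝ :=
  ∫ w, pZ p η xn w * gaussDensity d (1 - Real.exp (-2 * τ)) (x - Real.exp (-τ) • w)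

open Real

lemma mul_exp_neg_sq_div_le_sqrt {v r : ℝ} (hv : 0 < v) (hr : 0 ≤ r) :
    r * exp (-r ^ 2 / (2 * v)) ≤ √v := by
  obtain ⟨s, hs, rfl⟩ : ∃ s, 0 < s ∧ v = s ^ 2 := ⟨√v, sqrt_pos.2 hv, (sq_sqrt hv.le).symm⟩
  rw [sqrt_sq hs.le, neg_div, exp_neg, ← div_eq_mul_inv]
  have hexp := add_one_le_exp (r ^ 2 / (2 * s ^ 2))
  calc r / exp (r ^ 2 / (2 * s ^ 2)) ≤ r / (r ^ 2 / (2 * s ^ 2) + 1) :=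
        div_le_div_of_nonneg_left hr (by positivity) hexp
    _ ≤ s := by
        rw [div_le_iff₀ (by positivity), mul_add, mul_one, ← mul_div_assoc,
          show s * r ^ 2 / (2 * s ^ 2) = r ^ 2 / (2 * s) by field_simp]
        rw [← sub_nonneg]
        have : r ^ 2 / (2 * s) + s - r = (r - s) ^ 2 / (2 * s) + s / 2 := by
          field_simp; ring
        rw [this]; positivity

lemma integral_mul_pos_of_pos {α : Type*} [MeasurableSpace α] {μ : Measure α} {f g : α → ℝ}
    (hf : 0 ≤ f) (hf_pos : 0 < ∫ x, f x ∂μ) (hg : ∀ x, 0 < g x)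
    (hfg : Integrable (fun x => f x * g x) μ) : 0 < ∫ x, f x * g x ∂μ := by
  have hf_int : Integrable f μ := by
    by_contra h
    exact hf_pos.ne' (integral_undef h)
  have hsupp : Function.support (fun x => f x * g x) = Function.support f := by
    ext x; simp [(hg x).ne']
  rw [integral_pos_iff_support_of_nonneg hf hf_int] at hf_pos
  rw [integral_pos_iff_support_of_nonneg (fun x => mul_nonneg (hf x) (hg x).le) hfg, hsupp]
  exact hf_pos

lemma neg_norm_sq_div_add_neg_norm_sub_sq_div {F : Type*} [NormedAddCommGroup F]
    [InnerProductSpace ℝ F] {η a v b v' c q : ℝ}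
    (hw : 1 / η ^ 2 + a ^ 2 / v = b ^ 2 / v') (hyw : a / v = c * b / v')
    (hq : q = c ^ 2 / (2 * v') - 1 / (2 * v)) (y w : F) :
    -‖w‖ ^ 2 / (2 * η ^ 2) + -‖y - a • w‖ ^ 2 / (2 * v)
      = q * ‖y‖ ^ 2 + -‖c • y - b • w‖ ^ 2 / (2 * v') := by
  simp only [norm_sub_sq_real, norm_smul, inner_smul_left, inner_smul_right, mul_pow,
    Real.norm_eq_abs, sq_abs, conj_trivial]
  linear_combination (-‖w‖ ^ 2 / 2) * hw + inner ℝ y w * hyw - ‖y‖ ^ 2 * hq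

open InnerProductSpace in
lemma gradient_log_mul_exp_norm_sq_mul_comp {F : Type*} [NormedAddCommGroup F]
    [InnerProductSpace ℝ F] [CompleteSpace F] {f : F → ℝ} {K q c : ℝ} {a x : F}
    (hK : K ≠ 0) (hf : ∀ u, f u ≠ 0) (hfd : DifferentiableAt ℝ f (a + c • x)) :
    gradient (fun y => log (K * exp (q * ‖y‖ ^ 2) * f (a + c • y))) x
      = (2 * q) • x + c • gradient (fun u => log (f u)) (a + c • x) := by
  have hlog : (fun y => log (K * exp (q * ‖y‖ ^ 2) * f (a + c • y)))
      = fun y => log K + q * ‖y‖ ^ 2 + log (f (a + c • y)) := by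
    funext y
    rw [log_mul (mul_ne_zero hK (exp_pos _).ne') (hf _), log_mul hK (exp_pos _).ne', log_exp]
  have hquad := ((hasStrictFDerivAt_norm_sq x).hasFDerivAt.const_mul q).const_add (log K)
  have hcomp := ((hfd.log (hf _)).hasGradientAt.hasFDerivAt).comp x
    (((hasFDerivAt_id x).const_smul c).const_add a)
  rw [hlog]
  refine HasGradientAt.gradient (hasGradientAt_iff_hasFDerivAt.2 ?_)
  refine (hquad.add hcomp).congr_fderiv ?_
  ext u
  simp only [toDual_gradient, ContinuousLinearMap.comp_smulₛₗ, ringHom_apply,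
    ContinuousLinearMap.comp_id, add_apply, smul_apply, coe_innerSL_apply, nsmul_eq_mul,
    Nat.cast_ofNat, smul_eq_mul, map_add, map_smul, toDual_apply_apply, add_left_inj]
  ring

section GaussianDensity

variable {d : ℕ} {v : ℝ}

lemma gaussDensity_pos (hv : 0 < v) (u : EuclideanSpace ℝ (Fin d)) :
    0 < gaussDensity d v u := by
  unfold gaussDensity; positivity

lemma gaussDensity_le (hv : 0 < v) (u : EuclideanSpace ℝ (Fin d)) :
    gaussDensity d v u ≤ (2 * π * v) ^ (-(d : ℝ) / 2) := by
  refine mul_le_of_le_one_right (by positivity) (exp_le_one_iff.2 ?_)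
  exact div_nonpos_of_nonpos_of_nonneg (neg_nonpos.2 (by positivity)) (by positivity)

lemma gaussDensity_mul_norm_le (hv : 0 < v) (u : EuclideanSpace ℝ (Fin d)) :
    gaussDensity d v u * ‖u‖ ≤ (2 * π * v) ^ (-(d : ℝ) / 2) * √v := by
  rw [gaussDensity, mul_assoc, mul_comm (exp _)]
  gcongr
  exact mul_exp_neg_sq_div_le_sqrt hv (norm_nonneg u)

lemma hasFDerivAt_gaussDensity (u : EuclideanSpace ℝ (Fin d)) :
    HasFDerivAt (gaussDensity d v) (-(gaussDensity d v u / v) • innerSL ℝ u) u := by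
  have h := (((hasStrictFDerivAt_norm_sq u).hasFDerivAt.const_mul (-(2 * v)⁻¹)).exp).const_mul
    ((2 * π * v) ^ (-(d : ℝ) / 2))
  have hfun : gaussDensity d v =
      fun y => (2 * π * v) ^ (-(d : ℝ) / 2) * exp (-(2 * v)⁻¹ * ‖y‖ ^ 2) := by
    funext y; rw [gaussDensity]; ring_nf
  rw [hfun]
  refine h.congr_fderiv ?_
  ext w
  simp only [smul_apply, smul_eq_mul, nsmul_eq_mul, innerSL_apply_apply]
  ring

@[fun_prop]
lemma continuous_gaussDensity : Continuous (gaussDensity d v) := by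
  unfold gaussDensity; fun_prop

lemma exp_mul_gaussDensity_sub_smul {η a b v' c q : ℝ} (hv' : 0 < v')
    (hw : 1 / η ^ 2 + a ^ 2 / v = b ^ 2 / v')
    (hyw : a / v = c * b / v') (hq : q = c ^ 2 / (2 * v') - 1 / (2 * v))
    (y w : EuclideanSpace ℝ (Fin d)) :
    exp (-‖w‖ ^ 2 / (2 * η ^ 2)) * gaussDensity d v (y - a • w)
      = (2 * π * v) ^ (-(d : ℝ) / 2) / (2 * π * v') ^ (-(d : ℝ) / 2) * exp (q * ‖y‖ ^ 2)
        * gaussDensity d v' (c • y - b • w) := by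
  have hC : (2 * π * v') ^ (-(d : ℝ) / 2) ≠ 0 := by positivity
  have hexp := congrArg exp (neg_norm_sq_div_add_neg_norm_sub_sq_div hw hyw hq y w)
  rw [exp_add, exp_add] at hexp
  rw [gaussDensity, gaussDensity, mul_left_comm, hexp]
  field_simp

variable {p : EuclideanSpace ℝ (Fin d) → ℝ}

lemma integrable_mul_gaussDensity (hp : Integrable p) (hv : 0 < v) (s : ℝ)
    (y : EuclideanSpace ℝ (Fin d)) :
    Integrable (fun z => p z * gaussDensity d v (y - s • z)) := by
  refine hp.mul_bdd (c := (2 * π * v) ^ (-(d : ℝ) / 2))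
    (continuous_gaussDensity.comp (by fun_prop)).aestronglyMeasurable (ae_of_all _ fun z => ?_)
  rw [norm_of_nonneg (gaussDensity_pos hv _).le]
  exact gaussDensity_le hv _

lemma hasFDerivAt_mul_gaussDensity_sub_smul (s : ℝ) (z y : EuclideanSpace ℝ (Fin d)) :
    HasFDerivAt (fun y' => p z * gaussDensity d v (y' - s • z))
      (p z • -(gaussDensity d v (y - s • z) / v) • innerSL ℝ (y - s • z)) y := by
  have h := (hasFDerivAt_gaussDensity (v := v) (y - s • z)).comp y
    ((hasFDerivAt_id y).sub_const (s • z))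
  exact h.const_mul (p z)

lemma differentiable_integral_mul_gaussDensity (hp : Integrable p) (hv : 0 < v) (s : ℝ) :
    Differentiable ℝ (fun y => ∫ z, p z * gaussDensity d v (y - s • z)) := by
  intro y₀
  let C := (2 * π * v) ^ (-(d : ℝ) / 2) * √v / v
  have hbound : ∀ z y, ‖p z • -(gaussDensity d v (y - s • z) / v) • innerSL ℝ (y - s • z)‖
      ≤ C * ‖p z‖ := by
    intro z y
    rw [norm_smul, norm_smul, innerSL_apply_norm, norm_neg, norm_div,
      norm_of_nonneg (gaussDensity_pos hv _).le, norm_of_nonneg hv.le, mul_comm C,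
      div_mul_eq_mul_div]
    exact mul_le_mul_of_nonneg_left
      (div_le_div_of_nonneg_right (gaussDensity_mul_norm_le hv _) hv.le) (norm_nonneg _)
  refine (hasFDerivAt_integral_of_dominated_of_fderiv_le Filter.univ_mem
    (.of_forall fun y => (integrable_mul_gaussDensity hp hv s y).aestronglyMeasurable)
    (integrable_mul_gaussDensity hp hv s y₀) ?_ (ae_of_all _ fun z y _ => hbound z y)
    (hp.norm.const_mul C)
    (ae_of_all _ fun z y _ => hasFDerivAt_mul_gaussDensity_sub_smul s z y)).differentiableAt
  exact hp.aestronglyMeasurable.smul (Continuous.aestronglyMeasurable (by fun_prop))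

end GaussianDensity

lemma one_sub_exp_neg_two_mul_pos {τ : ℝ} (hτ : 0 < τ) : 0 < 1 - exp (-2 * τ) :=
  sub_pos.2 (exp_lt_one_iff.2 (by linarith))

section OrnsteinUhlenbeck

variable {d : ℕ} {p : EuclideanSpace ℝ (Fin d) → ℝ} {τ : ℝ}

lemma pOU_pos (hp : 0 ≤ p) (hp_pos : 0 < ∫ x, p x) (hτ : 0 < τ)
    (x : EuclideanSpace ℝ (Fin d)) : 0 < pOU p τ x :=
  integral_mul_pos_of_pos hp hp_pos
    (fun _ => gaussDensity_pos (one_sub_exp_neg_two_mul_pos hτ) _)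
    (integrable_mul_gaussDensity (Integrable.of_integral_ne_zero hp_pos.ne')
      (one_sub_exp_neg_two_mul_pos hτ) _ x)

lemma differentiable_pOU (hp : Integrable p) (hτ : 0 < τ) : Differentiable ℝ (pOU p τ) :=
  differentiable_integral_mul_gaussDensity hp (one_sub_exp_neg_two_mul_pos hτ) _

end OrnsteinUhlenbeck

lemma exp_two_mul_eq_sq (t : ℝ) : exp (2 * t) = exp t ^ 2 := by
  rw [← exp_nat_mul, Nat.cast_ofNat]

section PosteriorTime

variable {η τ τt : ℝ}

lemma mul_exp_sq_sub_one_of_eq_half_log (hη : 0 < η) (hτ : 0 < τ)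
    (hτt : τt = 1 / 2 * log (η ^ 2 * (exp (2 * τ) - 1) / (η ^ 2 + exp (2 * τ) - 1) + 1)) :
    (η ^ 2 + exp τ ^ 2 - 1) * (exp τt ^ 2 - 1) = η ^ 2 * (exp τ ^ 2 - 1) := by
  have he : 0 < exp τ ^ 2 - 1 := sub_pos.2 (one_lt_pow₀ (one_lt_exp_iff.2 hτ) two_ne_zero)
  have hB : 0 < η ^ 2 + exp τ ^ 2 - 1 := by linarith [pow_pos hη 2]
  have hA : 0 < η ^ 2 * (exp τ ^ 2 - 1) / (η ^ 2 + exp τ ^ 2 - 1) + 1 := by positivity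
  have hτt' : exp τt ^ 2 = η ^ 2 * (exp τ ^ 2 - 1) / (η ^ 2 + exp τ ^ 2 - 1) + 1 := by
    rw [← exp_two_mul_eq_sq, hτt, exp_two_mul_eq_sq τ, ← mul_assoc,
      mul_one_div_cancel two_ne_zero, one_mul, exp_log hA]
  rw [hτt']
  field_simp
  ring

lemma pos_of_eq_half_log (hη : 0 < η) (hτ : 0 < τ)
    (hτt : τt = 1 / 2 * log (η ^ 2 * (exp (2 * τ) - 1) / (η ^ 2 + exp (2 * τ) - 1) + 1)) :
    0 < τt := by
  have he : 0 < exp (2 * τ) - 1 := sub_pos.2 (one_lt_exp_iff.2 (by linarith))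
  have hfrac : 0 < η ^ 2 * (exp (2 * τ) - 1) / (η ^ 2 + exp (2 * τ) - 1) :=
    div_pos (mul_pos (pow_pos hη 2) he) (by linarith [pow_pos hη 2])
  rw [hτt]
  exact mul_pos one_half_pos (log_pos (by linarith))

lemma completeSquare_coeffs_of_eq_half_log (hη : 0 < η) (hτ : 0 < τ)
    (hτt : τt = 1 / 2 * log (η ^ 2 * (exp (2 * τ) - 1) / (η ^ 2 + exp (2 * τ) - 1) + 1)) :
    1 / η ^ 2 + exp (-τ) ^ 2 / (1 - exp (-2 * τ)) = exp (-τt) ^ 2 / (1 - exp (-2 * τt)) ∧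
    exp (-τ) / (1 - exp (-2 * τ))
      = exp (τ - τt) * η ^ 2 / (η ^ 2 + exp (2 * τ) - 1) * exp (-τt) / (1 - exp (-2 * τt)) ∧
    -(exp (2 * τ) / (η ^ 2 + exp (2 * τ) - 1)) / 2
      = (exp (τ - τt) * η ^ 2 / (η ^ 2 + exp (2 * τ) - 1)) ^ 2 / (2 * (1 - exp (-2 * τt)))
        - 1 / (2 * (1 - exp (-2 * τ))) := by
  have hrel := mul_exp_sq_sub_one_of_eq_half_log hη hτ hτt
  simp only [neg_mul, exp_neg, exp_two_mul_eq_sq, exp_sub]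
  have he : 0 < exp τ ^ 2 - 1 := sub_pos.2 (one_lt_pow₀ (one_lt_exp_iff.2 hτ) two_ne_zero)
  have hB : 0 < η ^ 2 + exp τ ^ 2 - 1 := by linarith [pow_pos hη 2]
  have het : 0 < exp τt ^ 2 - 1 :=
    (mul_pos_iff_of_pos_left hB).1 (hrel ▸ mul_pos (pow_pos hη 2) he)
  refine ⟨?_, ?_, ?_⟩
  · field_simp
    linear_combination hrel
  · field_simp
    linear_combination hrel
  · field_simp
    linear_combination η ^ 2 * hrel

end PosteriorTime

lemma pZMarginal_eq_mul_pOU {d : ℕ} {p : EuclideanSpace ℝ (Fin d) → ℝ} {η τ τt c q : ℝ}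
    (xn : EuclideanSpace ℝ (Fin d)) (hτt : 0 < τt)
    (hw : 1 / η ^ 2 + exp (-τ) ^ 2 / (1 - exp (-2 * τ)) = exp (-τt) ^ 2 / (1 - exp (-2 * τt)))
    (hyw : exp (-τ) / (1 - exp (-2 * τ)) = c * exp (-τt) / (1 - exp (-2 * τt)))
    (hq : q = c ^ 2 / (2 * (1 - exp (-2 * τt))) - 1 / (2 * (1 - exp (-2 * τ))))
    (y : EuclideanSpace ℝ (Fin d)) :
    pZMarginal p η xn τ y
      = (2 * π * (1 - exp (-2 * τ))) ^ (-(d : ℝ) / 2)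
          / (2 * π * (1 - exp (-2 * τt))) ^ (-(d : ℝ) / 2)
          / (∫ x', p (x' + xn) * exp (-‖x'‖ ^ 2 / (2 * η ^ 2))) * exp (q * ‖y‖ ^ 2)
        * pOU p τt (exp (-τt) • xn + c • y) := by
  simp only [pZMarginal, pZ, pOU]
  rw [← integral_add_right_eq_self (fun z => p z * gaussDensity d (1 - exp (-2 * τt))
    (exp (-τt) • xn + c • y - exp (-τt) • z)) xn, ← integral_const_mul]
  refine integral_congr_ae (ae_of_all _ fun w => ?_)
  have hshift : exp (-τt) • xn + c • y - exp (-τt) • (w + xn) = c • y - exp (-τt) • w := by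
    rw [smul_add]; abel
  dsimp only
  rw [hshift]
  calc _ = p (w + xn) / (∫ x', p (x' + xn) * exp (-‖x'‖ ^ 2 / (2 * η ^ 2)))
        * (exp (-‖w‖ ^ 2 / (2 * η ^ 2))
          * gaussDensity d (1 - exp (-2 * τ)) (y - exp (-τ) • w)) := by
        ring
    _ = _ := by
        rw [exp_mul_gaussDensity_sub_smul (one_sub_exp_neg_two_mul_pos hτt) hw hyw hq]
        ring

theorem stmt2_general {d : ℕ} (p : EuclideanSpace ℝ (Fin d) → ℝ)
    (hnonneg : ∀ x, 0 ≤ p x) (hint : ∫ x, p x = 1)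
    (η : ℝ) (hη : 0 < η) (xn : EuclideanSpace ℝ (Fin d))
    (hZ : 0 < ∫ x', p (x' + xn) * Real.exp (-‖x'‖ ^ 2 / (2 * η ^ 2)))
    (τ : ℝ) (hτ : 0 < τ)
    (τt : ℝ)
    (hτt : τt = (1 / 2) *
      Real.log (η ^ 2 * (Real.exp (2 * τ) - 1) / (η ^ 2 + Real.exp (2 * τ) - 1) + 1))
    (x : EuclideanSpace ℝ (Fin d)) :
    gradient (fun y => Real.log (pZMarginal p η xn τ y)) x
      = -(Real.exp (2 * τ) / (η ^ 2 + Real.exp (2 * τ) - 1)) • x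
        + (Real.exp (τ - τt) * η ^ 2 / (η ^ 2 + Real.exp (2 * τ) - 1)) •
            score p τt
              (Real.exp (-τt) • xn
                + (Real.exp (τ - τt) * η ^ 2 / (η ^ 2 + Real.exp (2 * τ) - 1)) • x) := by
  have hτt_pos := pos_of_eq_half_log hη hτ hτt
  obtain ⟨hw, hyw, hq⟩ := completeSquare_coeffs_of_eq_half_log hη hτ hτt
  have hp_pos : 0 < ∫ x, p x := hint ▸ one_pos
  have hK : (2 * π * (1 - exp (-2 * τ))) ^ (-(d : ℝ) / 2)
      / (2 * π * (1 - exp (-2 * τt))) ^ (-(d : ℝ) / 2)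
      / (∫ x', p (x' + xn) * exp (-‖x'‖ ^ 2 / (2 * η ^ 2))) ≠ 0 := by
    have hv := one_sub_exp_neg_two_mul_pos hτ
    have hv' := one_sub_exp_neg_two_mul_pos hτt_pos
    exact div_ne_zero (by positivity) hZ.ne'
  simp_rw [funext (pZMarginal_eq_mul_pOU (p := p) xn hτt_pos hw hyw hq)]
  rw [gradient_log_mul_exp_norm_sq_mul_comp hK (fun u => (pOU_pos hnonneg hp_pos hτt_pos u).ne')
    (differentiable_pOU (Integrable.of_integral_ne_zero hp_pos.ne') hτt_pos _), score,
    mul_div_cancel₀ _ two_ne_zero]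

/-- Score of the OU flow started from the denoising posterior, expressed through the
unconditional score `s` of the prior `p⋆`. -/
theorem stmt2 {d : ℕ} (p : EuclideanSpace ℝ (Fin d) → ℝ)
    (hmeas : Measurable p) (hnonneg : ∀ x, 0 ≤ p x) (hint : ∫ x, p x = 1)
    (η : ℝ) (hη : 0 < η) (xn : EuclideanSpace ℝ (Fin d))
    (hZ : 0 < ∫ x', p (x' + xn) * Real.exp (-‖x'‖ ^ 2 / (2 * η ^ 2)))
    (τ : ℝ) (hτ : 0 < τ)
    (τt : ℝ)
    (hτt : τt = (1 / 2) *
      Real.log (η ^ 2 * (Real.exp (2 * τ) - 1) / (η ^ 2 + Real.exp (2 * τ) - 1) + 1))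
    (x : EuclideanSpace ℝ (Fin d)) :
    gradient (fun y => Real.log (pZMarginal p η xn τ y)) x
      = -(Real.exp (2 * τ) / (η ^ 2 + Real.exp (2 * τ) - 1)) • x
        + (Real.exp (τ - τt) * η ^ 2 / (η ^ 2 + Real.exp (2 * τ) - 1)) •
            score p τt
              (Real.exp (-τt) • xn
                + (Real.exp (τ - τt) * η ^ 2 / (η ^ 2 + Real.exp (2 * τ) - 1)) • x) :=
  stmt2_general p hnonneg hint η hη xn hZ τ hτ τt hτt x
end

section
/- Fix η > 0, x_noisy ∈ ℝ^d, τ > 0, and a probability density p⋆ on ℝ^d. With p_z(x) = p⋆(x + x_noisy) e^{−‖x‖²/(2η²)} / Z (Z = ∫ p⋆(x' + x_noisy) e^{−‖x'‖²/(2η²)} dx' > 0), p^Z_τ(x) = ∫ p_z(w) φ_{1−e^{−2τ}}(x − e^{−τ} w) dw, and τ̃ = (1/2)·log( η² (e^{2τ} − 1)/(η² + e^{2τ} − 1) + 1 ), there exists a constant c > 0 (depending on p⋆, η, x_noisy, τ but not on x) such that for every x ∈ ℝ^d: p^Z_τ(x) = c · exp( − e^{2τ} ‖x‖² / (2(η²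 + e^{2τ} − 1)) ) · p^{OU}_{τ̃}( e^{−τ̃} x_noisy + e^{τ−τ̃} η² x / (η² + e^{2τ} − 1) ). -/
open MeasureTheory

section GaussKernel

variable {E : Type*} [NormedAddCommGroup E]

noncomputable def gaussKernel (v : ℝ) (x : E) : ℝ :=
  Real.exp (-‖x‖ ^ 2 / (2 * v))

theorem gaussKernel_smul [NormedSpace ℝ E] {c : ℝ} (hc : c ≠ 0) (v : ℝ) (x : E) :
    gaussKernel (c ^ 2 * v) (c • x) = gaussKernel v x := by
  unfold gaussKernel
  rw [norm_smul, mul_pow, Real.norm_eq_abs, sq_abs]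
  congr 1
  field_simp

theorem gaussKernel_sub_comm (v : ℝ) (x y : E) :
    gaussKernel v (x - y) = gaussKernel v (y - x) := by
  rw [gaussKernel, gaussKernel, norm_sub_rev]

theorem gaussKernel_exp_smul [NormedSpace ℝ E] (v τ : ℝ) (x : E) :
    gaussKernel v (Real.exp τ • x) = Real.exp (-(Real.exp (2 * τ) * ‖x‖ ^ 2) / (2 * v)) := by
  rw [gaussKernel, norm_smul, mul_pow, Real.norm_eq_abs, sq_abs, ← Real.exp_nat_mul,
    neg_div, neg_div]
  norm_num

/-- Prior `N(0, a)` times likelihood `N(w, b)` at `y` equals evidence `N(0, a + b)` at `y` times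
posterior in `w`. -/
theorem gaussKernel_mul_gaussKernel_sub [InnerProductSpace ℝ E] {a b : ℝ} (ha : a ≠ 0)
    (hb : b ≠ 0) (hab : a + b ≠ 0) (w y : E) :
    gaussKernel a w * gaussKernel b (y - w)
      = gaussKernel (a + b) y * gaussKernel (a * b / (a + b)) (w - (a / (a + b)) • y) := by
  unfold gaussKernel
  rw [← Real.exp_add, ← Real.exp_add, norm_sub_sq_real, norm_sub_sq_real, norm_smul,
    real_inner_smul_right, Real.norm_eq_abs, mul_pow, sq_abs, real_inner_comm w y]
  congr 1
  field_simp
  ring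

end GaussKernel

theorem one_sub_exp_neg_two_mul (t : ℝ) :
    1 - Real.exp (-2 * t) = Real.exp (-t) ^ 2 * (Real.exp (2 * t) - 1) := by
  rw [← Real.exp_nat_mul, mul_sub, ← Real.exp_add]
  push_cast
  ring_nf
  simp only [Real.exp_zero]
  ring

theorem gaussDensity_eq (d : ℕ) (v : ℝ) (x : EuclideanSpace ℝ (Fin d)) :
    gaussDensity d v x = (2 * Real.pi * v) ^ (-(d : ℝ) / 2) * gaussKernel v x := rfl

theorem gaussDensity_ou (d : ℕ) (t : ℝ) (x z : EuclideanSpace ℝ (Fin d)) :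
    gaussDensity d (1 - Real.exp (-2 * t)) (x - Real.exp (-t) • z)
      = (2 * Real.pi * (1 - Real.exp (-2 * t))) ^ (-(d : ℝ) / 2) *
          gaussKernel (Real.exp (2 * t) - 1) (Real.exp t • x - z) := by
  have hx : x - Real.exp (-t) • z = Real.exp (-t) • (Real.exp t • x - z) := by
    rw [smul_sub, smul_smul, ← Real.exp_add, neg_add_cancel, Real.exp_zero, one_smul]
  rw [gaussDensity_eq, hx]
  congr 1
  rw [one_sub_exp_neg_two_mul, gaussKernel_smul (Real.exp_pos _).ne']

theorem pOU_eq_integral_gaussKernel (d : ℕ) (p : EuclideanSpace ℝ (Fin d) → ℝ) (t : ℝ)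
    (y xn : EuclideanSpace ℝ (Fin d)) :
    pOU p t y = (2 * Real.pi * (1 - Real.exp (-2 * t))) ^ (-(d : ℝ) / 2) *
      ∫ w, p (w + xn) * gaussKernel (Real.exp (2 * t) - 1) (w - (Real.exp t • y - xn)) := by
  rw [pOU, ← integral_const_mul, ← integral_add_right_eq_self _ xn]
  congr 1 with w
  rw [gaussDensity_ou, gaussKernel_sub_comm, sub_sub_eq_add_sub, mul_left_comm]

theorem pZMarginal_eq_integral_gaussKernel {d : ℕ} (p : EuclideanSpace ℝ (Fin d) → ℝ) {η : ℝ}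
    (hη : η ≠ 0) (xn : EuclideanSpace ℝ (Fin d)) {τ : ℝ} (hB : Real.exp (2 * τ) - 1 ≠ 0)
    (hηB : η ^ 2 + (Real.exp (2 * τ) - 1) ≠ 0) (x : EuclideanSpace ℝ (Fin d)) :
    pZMarginal p η xn τ x
      = (∫ x', p (x' + xn) * Real.exp (-‖x'‖ ^ 2 / (2 * η ^ 2)))⁻¹ *
          (2 * Real.pi * (1 - Real.exp (-2 * τ))) ^ (-(d : ℝ) / 2) *
          gaussKernel (η ^ 2 + (Real.exp (2 * τ) - 1)) (Real.exp τ • x) *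
          ∫ w, p (w + xn) *
            gaussKernel (η ^ 2 * (Real.exp (2 * τ) - 1) / (η ^ 2 + (Real.exp (2 * τ) - 1)))
              (w - (η ^ 2 / (η ^ 2 + (Real.exp (2 * τ) - 1))) • Real.exp τ • x) := by
  rw [pZMarginal, ← integral_const_mul]
  congr 1 with w
  have hprod := gaussKernel_mul_gaussKernel_sub (pow_ne_zero 2 hη) hB hηB w (Real.exp τ • x)
  rw [pZ, gaussDensity_ou,
    show Real.exp (-‖w‖ ^ 2 / (2 * η ^ 2)) = gaussKernel (η ^ 2) w from rfl]
  simp only [div_eq_mul_inv] at hprod ⊢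
  linear_combination
    ((∫ x', p (x' + xn) * Real.exp (-‖x'‖ ^ 2 * (2 * η ^ 2)⁻¹))⁻¹ *
      (2 * Real.pi * (1 - Real.exp (-2 * τ))) ^ (-(d : ℝ) * 2⁻¹) * p (w + xn)) * hprod

theorem exp_smul_add_smul_sub {E : Type*} [AddCommGroup E] [Module ℝ E] (t τ a b : ℝ) (u x : E) :
    Real.exp t • (Real.exp (-t) • u + (Real.exp (τ - t) * a / b) • x) - u
      = (a / b) • Real.exp τ • x := by
  rw [smul_add, smul_smul, smul_smul, smul_smul, ← Real.exp_add, add_neg_cancel, Real.exp_zero,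
    one_smul, add_sub_cancel_left, mul_div_assoc', ← mul_assoc, ← Real.exp_add, add_sub_cancel]
  congr 1
  ring

theorem stmt3_general {d : ℕ} (p : EuclideanSpace ℝ (Fin d) → ℝ)
    (η : ℝ) (hη : 0 < η) (xn : EuclideanSpace ℝ (Fin d))
    (hZ : 0 < ∫ x', p (x' + xn) * Real.exp (-‖x'‖ ^ 2 / (2 * η ^ 2)))
    (τ : ℝ) (hτ : 0 < τ)
    (τt : ℝ)
    (hτt : τt = (1 / 2) *
      Real.log (η ^ 2 * (Real.exp (2 * τ) - 1) / (η ^ 2 + Real.exp (2 * τ) - 1) + 1)) :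
    ∃ c : ℝ, 0 < c ∧ ∀ x : EuclideanSpace ℝ (Fin d),
      pZMarginal p η xn τ x
        = c * Real.exp (-(Real.exp (2 * τ) * ‖x‖ ^ 2) / (2 * (η ^ 2 + Real.exp (2 * τ) - 1))) *
            pOU p τt
              (Real.exp (-τt) • xn
                + (Real.exp (τ - τt) * η ^ 2 / (η ^ 2 + Real.exp (2 * τ) - 1)) • x) := by
  have hden : η ^ 2 + Real.exp (2 * τ) - 1 = η ^ 2 + (Real.exp (2 * τ) - 1) := by ring
  have hB : 0 < Real.exp (2 * τ) - 1 := sub_pos.2 (Real.one_lt_exp_iff.2 (by positivity))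
  rw [hden] at hτt ⊢
  generalize hB_def : Real.exp (2 * τ) - 1 = B at hB hτt ⊢
  have hτt_exp : Real.exp (2 * τt) - 1 = η ^ 2 * B / (η ^ 2 + B) := by
    rw [hτt, ← mul_assoc, mul_one_div_cancel two_ne_zero, one_mul, Real.exp_log (by positivity),
      add_sub_cancel_right]
  have hCτ : 0 < (2 * Real.pi * (1 - Real.exp (-2 * τ))) ^ (-(d : ℝ) / 2) :=
    Real.rpow_pos_of_pos (by rw [one_sub_exp_neg_two_mul, hB_def]; positivity) _
  have hCτt : 0 < (2 * Real.pi * (1 - Real.exp (-2 * τt))) ^ (-(d : ℝ) / 2) :=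
    Real.rpow_pos_of_pos (by rw [one_sub_exp_neg_two_mul, hτt_exp]; positivity) _
  refine ⟨(∫ x', p (x' + xn) * Real.exp (-‖x'‖ ^ 2 / (2 * η ^ 2)))⁻¹ *
      (2 * Real.pi * (1 - Real.exp (-2 * τ))) ^ (-(d : ℝ) / 2) /
      (2 * Real.pi * (1 - Real.exp (-2 * τt))) ^ (-(d : ℝ) / 2), by positivity, fun x => ?_⟩
  rw [pZMarginal_eq_integral_gaussKernel p hη.ne' xn (hB_def ▸ hB.ne')
      (by rw [hB_def]; positivity), hB_def, pOU_eq_integral_gaussKernel d p τt _ xn, hτt_exp,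
    exp_smul_add_smul_sub, gaussKernel_exp_smul]
  generalize (2 * Real.pi * (1 - Real.exp (-2 * τt))) ^ (-(d : ℝ) / 2) = Cτt at hCτt ⊢
  field_simp

/-- `p^Z_τ` factorizes, up to a positive constant, as a Gaussian factor times the OU marginal
of the prior evaluated at a rescaled/recentred point. -/
theorem stmt3 {d : ℕ} (p : EuclideanSpace ℝ (Fin d) → ℝ)
    (hmeas : Measurable p) (hnonneg : ∀ x, 0 ≤ p x) (hint : ∫ x, p x = 1)
    (η : ℝ) (hη : 0 < η) (xn : EuclideanSpace ℝ (Fin d))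
    (hZ : 0 < ∫ x', p (x' + xn) * Real.exp (-‖x'‖ ^ 2 / (2 * η ^ 2)))
    (τ : ℝ) (hτ : 0 < τ)
    (τt : ℝ)
    (hτt : τt = (1 / 2) *
      Real.log (η ^ 2 * (Real.exp (2 * τ) - 1) / (η ^ 2 + Real.exp (2 * τ) - 1) + 1)) :
    ∃ c : ℝ, 0 < c ∧ ∀ x : EuclideanSpace ℝ (Fin d),
      pZMarginal p η xn τ x
        = c * Real.exp (-(Real.exp (2 * τ) * ‖x‖ ^ 2) / (2 * (η ^ 2 + Real.exp (2 * τ) - 1))) *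
            pOU p τt
              (Real.exp (-τt) • xn
                + (Real.exp (τ - τt) * η ^ 2 / (η ^ 2 + Real.exp (2 * τ) - 1)) • x) :=
  stmt3_general p η hη xn hZ τ hτ τt hτt
end
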